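/- Pointwise truncated Taylor estimate: let q > 2. There exists a constant C > 0, depending only on q, such that for every δ ∈ (0,1] and every t ∈ ℝ, | |1+t|^q − 1 − qt − (q(q−1)/2) t² | ≤ C ( δ t² + δ^{2−q} |t|^q ). -/

import Mathlib

/-!
The remainder is controlled by the oscillation of the second derivative
`q (q - 1) |1 + s| ^ (q - 2)` on `[0, t]`, through two mean value estimates. For `|t| ≤ 1`
this gives `O(|t| ^ q)` when `q ≤ 3`, since `x ↦ x ^ (q - 2)` is `(q - 2)`-Hölder, and
`O(|t| ^ 3)` when `q ≥ 3`, since it is Lipschitz on `[0, 2]`; for `|t| ≥ 1` every term is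
`O(|t| ^ q)`. Finally `|t| ^ q ≤ δ ^ (2 - q) |t| ^ q`, and for `q ≥ 3` the cubic term splits at
`|t| = δ`: `|t| ^ 3 ≤ δ t ^ 2` below and `|t| ^ 3 ≤ δ ^ (2 - q) |t| ^ q` above.
-/

open Real Set

theorem norm_taylor_remainder_two_le {E : Type*} [NormedAddCommGroup E] [NormedSpace ℝ E]
    {f f' f'' : ℝ → E} {a b M : ℝ}
    (hf : ∀ x ∈ uIcc a b, HasDerivWithinAt f (f' x) (uIcc a b) x)
    (hf' : ∀ x ∈ uIcc a b, HasDerivWithinAt f' (f'' x) (uIcc a b) x)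
    (hM : ∀ x ∈ uIcc a b, ‖f'' x - f'' a‖ ≤ M) :
    ‖f b - f a - (b - a) • f' a - ((b - a) ^ 2 / 2) • f'' a‖ ≤ M * (b - a) ^ 2 := by
  have hM0 : 0 ≤ M := by simpa using hM a left_mem_uIcc
  have hlin : ∀ (v : E) (y : ℝ), HasDerivWithinAt (fun y => (y - a) • v) v (uIcc a b) y :=
    fun v y => by simpa using ((hasDerivAt_id' y).sub_const a |>.smul_const v).hasDerivWithinAt
  have hderiv_bound : ∀ x ∈ uIcc a b, ‖f' x - f' a - (x - a) • f'' a‖ ≤ M * |b - a| := by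
    intro x hx
    calc ‖f' x - f' a - (x - a) • f'' a‖ ≤ M * ‖x - a‖ := by
          simpa [sub_right_comm] using (convex_uIcc a b).norm_image_sub_le_of_norm_hasDerivWithin_le
            (fun y hy => (hf' y hy).fun_sub (hlin _ y)) hM left_mem_uIcc hx
      _ ≤ M * |b - a| := by gcongr; exact abs_sub_left_of_mem_uIcc hx
  have hquad : ∀ y ∈ uIcc a b, HasDerivWithinAt (fun y => ((y - a) ^ 2 / 2) • f'' a)
      ((y - a) • f'' a) (uIcc a b) y := fun y _ => by
    convert ((hasDerivAt_id' y).sub_const a |>.fun_pow 2 |>.div_const 2 |>.smul_const (f'' a)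
      |>.hasDerivWithinAt) using 2
    norm_num
  calc _ ≤ M * |b - a| * ‖b - a‖ := by
        simpa [sub_right_comm _ (f a)] using
          (convex_uIcc a b).norm_image_sub_le_of_norm_hasDerivWithin_le
          (fun y hy => ((hf y hy).fun_sub (hlin _ y)).fun_sub (hquad y hy))
          hderiv_bound left_mem_uIcc right_mem_uIcc
    _ = M * (b - a) ^ 2 := by rw [Real.norm_eq_abs, mul_assoc, abs_mul_abs_self, sq]

theorem abs_rpow_sub_rpow_le_abs_sub_rpow {p x y : ℝ} (hx : 0 ≤ x) (hy : 0 ≤ y) (hp0 : 0 ≤ p)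
    (hp1 : p ≤ 1) : |x ^ p - y ^ p| ≤ |x - y| ^ p := by
  wlog hxy : y ≤ x generalizing x y
  · rw [abs_sub_comm, abs_sub_comm x]
    exact this hy hx (le_of_not_ge hxy)
  have hsub : x ^ p ≤ y ^ p + (x - y) ^ p := by
    simpa using rpow_add_le_add_rpow hy (sub_nonneg.2 hxy) hp0 hp1
  rw [abs_of_nonneg (sub_nonneg.2 (rpow_le_rpow hy hxy hp0)), abs_of_nonneg (sub_nonneg.2 hxy)]
  linarith

theorem abs_rpow_sub_rpow_le_mul_abs_sub {p b x y : ℝ} (hp : 1 ≤ p) (hx : x ∈ Icc 0 b)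
    (hy : y ∈ Icc 0 b) : |x ^ p - y ^ p| ≤ p * b ^ (p - 1) * |x - y| := by
  have hderiv : ∀ z ∈ Icc 0 b, HasDerivWithinAt (fun z => z ^ p) (p * z ^ (p - 1)) (Icc 0 b) z :=
    fun z _ => (hasDerivAt_rpow_const (Or.inr hp)).hasDerivWithinAt
  have hbound : ∀ z ∈ Icc 0 b, ‖p * z ^ (p - 1)‖ ≤ p * b ^ (p - 1) := fun z hz => by
    have := hz.1
    rw [norm_eq_abs, abs_of_nonneg (by positivity)]
    gcongr
    exact hz.2
  simpa using (convex_Icc 0 b).norm_image_sub_le_of_norm_hasDerivWithin_le hderiv hbound hy hx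

noncomputable def rpowTaylorRemainder (q t : ℝ) : ℝ :=
  |1 + t| ^ q - 1 - q * t - q * (q - 1) / 2 * t ^ 2

theorem abs_rpowTaylorRemainder_le_mul_sq {q t M : ℝ} (hq : 2 ≤ q) (ht : -1 ≤ t)
    (hM : ∀ s, |s| ≤ |t| → q * (q - 1) * |(1 + s) ^ (q - 2) - 1| ≤ M) :
    |rpowTaylorRemainder q t| ≤ M * t ^ 2 := by
  have hf : ∀ s, HasDerivAt (fun s => (1 + s) ^ q) (q * (1 + s) ^ (q - 1)) s := fun s => by
    simpa using ((hasDerivAt_id' s).const_add 1).rpow_const (p := q) (Or.inr (by linarith))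
  have hf' : ∀ s, HasDerivAt (fun s => q * (1 + s) ^ (q - 1)) (q * (q - 1) * (1 + s) ^ (q - 2)) s :=
    fun s => by
      refine (((hasDerivAt_id' s).const_add 1).rpow_const (p := q - 1)
        (Or.inr (by linarith))).const_mul q |>.congr_deriv ?_
      rw [show q - 1 - 1 = q - 2 by ring]
      ring
  have htaylor := norm_taylor_remainder_two_le (a := 0) (b := t) (M := M)
    (fun s _ => (hf s).hasDerivWithinAt) (fun s _ => (hf' s).hasDerivWithinAt) (fun s hs => by
      have hst : |s| ≤ |t| := by simpa using abs_sub_left_of_mem_uIcc hs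
      have hq1 : 0 ≤ q * (q - 1) := by nlinarith
      simpa only [add_zero, one_rpow, mul_one, norm_eq_abs, ← mul_sub_one, abs_mul,
        abs_of_nonneg hq1] using hM s hst)
  simp only [sub_zero, add_zero, one_rpow, mul_one, smul_eq_mul, norm_eq_abs] at htaylor
  rw [rpowTaylorRemainder, abs_of_nonneg (by linarith : 0 ≤ 1 + t)]
  convert htaylor using 2
  ring

theorem abs_rpowTaylorRemainder_le_of_le_three {q t : ℝ} (hq2 : 2 ≤ q) (hq3 : q ≤ 3)
    (ht : |t| ≤ 1) : |rpowTaylorRemainder q t| ≤ q * (q - 1) * |t| ^ q := by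
  have hM : ∀ s, |s| ≤ |t| → q * (q - 1) * |(1 + s) ^ (q - 2) - 1| ≤ q * (q - 1) * |t| ^ (q - 2) :=
    fun s hs => by
      have hs1 : 0 ≤ 1 + s := by linarith [neg_abs_le s]
      have hq1 : 0 ≤ q * (q - 1) := by nlinarith
      gcongr
      calc |(1 + s) ^ (q - 2) - 1| = |(1 + s) ^ (q - 2) - 1 ^ (q - 2)| := by rw [one_rpow]
        _ ≤ |1 + s - 1| ^ (q - 2) :=
          abs_rpow_sub_rpow_le_abs_sub_rpow hs1 zero_le_one (by linarith) (by linarith)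
        _ ≤ |t| ^ (q - 2) := by
          rw [add_sub_cancel_left]
          exact rpow_le_rpow (abs_nonneg s) hs (by linarith)
  calc _ ≤ q * (q - 1) * |t| ^ (q - 2) * t ^ 2 :=
        abs_rpowTaylorRemainder_le_mul_sq hq2 (by linarith [neg_abs_le t]) hM
    _ = q * (q - 1) * |t| ^ q := by
      rw [mul_assoc, ← sq_abs t, ← rpow_natCast, ← rpow_add' (abs_nonneg t) (by norm_num; linarith)]
      norm_num

theorem abs_rpowTaylorRemainder_le_of_three_le {q t : ℝ} (hq : 3 ≤ q) (ht : |t| ≤ 1) :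
    |rpowTaylorRemainder q t| ≤ q * (q - 1) * ((q - 2) * 2 ^ (q - 3)) * |t| ^ 3 := by
  have hM : ∀ s, |s| ≤ |t| →
      q * (q - 1) * |(1 + s) ^ (q - 2) - 1| ≤ q * (q - 1) * ((q - 2) * 2 ^ (q - 3)) * |t| :=
    fun s hs => by
      have hs1 : 1 + s ∈ Icc 0 2 := ⟨by linarith [neg_abs_le s], by linarith [le_abs_self s]⟩
      have hq1 : 0 ≤ q * (q - 1) := by nlinarith
      rw [mul_assoc _ _ |t|]
      refine mul_le_mul_of_nonneg_left ?_ hq1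
      calc |(1 + s) ^ (q - 2) - 1| = |(1 + s) ^ (q - 2) - 1 ^ (q - 2)| := by rw [one_rpow]
        _ ≤ (q - 2) * 2 ^ (q - 2 - 1) * |1 + s - 1| :=
          abs_rpow_sub_rpow_le_mul_abs_sub (by linarith) hs1 ⟨zero_le_one, one_le_two⟩
        _ ≤ (q - 2) * 2 ^ (q - 3) * |t| := by
          rw [add_sub_cancel_left, show q - 2 - 1 = q - 3 by ring]
          exact mul_le_mul_of_nonneg_left hs (mul_nonneg (by linarith) (by positivity))
  calc _ ≤ q * (q - 1) * ((q - 2) * 2 ^ (q - 3)) * |t| * t ^ 2 :=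
        abs_rpowTaylorRemainder_le_mul_sq (by linarith) (by linarith [neg_abs_le t]) hM
    _ = _ := by rw [← sq_abs t]; ring

theorem abs_rpowTaylorRemainder_le_of_one_le_abs {q t : ℝ} (hq : 2 ≤ q) (ht : 1 ≤ |t|) :
    |rpowTaylorRemainder q t| ≤ (2 ^ q + 1 + q + q ^ 2) * |t| ^ q := by
  have h0 : 1 ≤ |t| ^ q := one_le_rpow ht (by linarith)
  have h1 : |t| ≤ |t| ^ q := by
    simpa using rpow_le_rpow_of_exponent_le ht (by linarith : (1:ℝ) ≤ q)
  have h2 : t ^ 2 ≤ |t| ^ q := calc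
    t ^ 2 = |t| ^ (2 : ℝ) := by rw [rpow_two, sq_abs]
    _ ≤ |t| ^ q := rpow_le_rpow_of_exponent_le ht hq
  have hshift : |1 + t| ^ q ≤ 2 ^ q * |t| ^ q := calc
    |1 + t| ^ q ≤ (2 * |t|) ^ q := by
      gcongr
      linarith [abs_add_le 1 t, abs_one (α := ℝ)]
    _ = 2 ^ q * |t| ^ q := mul_rpow zero_le_two (abs_nonneg t)
  have hqt : |q * t| ≤ q * |t| ^ q := by
    rw [abs_mul, abs_of_nonneg (by linarith : (0:ℝ) ≤ q)]
    gcongr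
  have hquad : q * (q - 1) / 2 * t ^ 2 ≤ q ^ 2 * |t| ^ q := by
    have : q * (q - 1) / 2 ≤ q ^ 2 := by nlinarith
    gcongr
  have hq1 : 0 ≤ q * (q - 1) := by nlinarith
  have : 0 ≤ q * (q - 1) / 2 * t ^ 2 := by positivity
  have : 0 ≤ |1 + t| ^ q := by positivity
  have : 0 ≤ q ^ 2 * |t| ^ q := by positivity
  rw [rpowTaylorRemainder, abs_le]
  constructor <;> linarith [abs_le.1 hqt]

theorem abs_rpow_le_mul_sq_add_rpow_mul {δ q : ℝ} (t : ℝ) (hδ0 : 0 < δ) (hδ1 : δ ≤ 1)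
    (hq : 2 ≤ q) : |t| ^ q ≤ δ * t ^ 2 + δ ^ (2 - q) * |t| ^ q := calc
  |t| ^ q ≤ δ ^ (2 - q) * |t| ^ q :=
    le_mul_of_one_le_left (by positivity)
      (one_le_rpow_of_pos_of_le_one_of_nonpos hδ0 hδ1 (by linarith))
  _ ≤ δ * t ^ 2 + δ ^ (2 - q) * |t| ^ q := le_add_of_nonneg_left (by positivity)

theorem abs_pow_three_le_mul_sq_add_rpow_mul {δ q : ℝ} (t : ℝ) (hδ0 : 0 < δ) (hδ1 : δ ≤ 1)
    (hq : 3 ≤ q) : |t| ^ 3 ≤ δ * t ^ 2 + δ ^ (2 - q) * |t| ^ q := by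
  rcases le_or_gt |t| δ with htδ | htδ
  · have : |t| ^ 3 ≤ δ * t ^ 2 := by
      rw [← sq_abs t, pow_succ']
      gcongr
    linarith [show 0 ≤ δ ^ (2 - q) * |t| ^ q by positivity]
  · have ht : 0 < |t| := hδ0.trans htδ
    have : |t| ^ 3 ≤ δ ^ (2 - q) * |t| ^ q := calc
      |t| ^ 3 = |t| ^ (3 - q) * |t| ^ q := by
        rw [← rpow_add ht, sub_add_cancel]
        norm_cast
      _ ≤ δ ^ (3 - q) * |t| ^ q :=
        mul_le_mul_of_nonneg_right (rpow_le_rpow_of_nonpos hδ0 htδ.le (by linarith))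
          (by positivity)
      _ ≤ δ ^ (2 - q) * |t| ^ q :=
        mul_le_mul_of_nonneg_right (rpow_le_rpow_of_exponent_ge hδ0 hδ1 (by linarith))
          (by positivity)
    linarith [show 0 ≤ δ * t ^ 2 by positivity]

theorem exists_abs_rpowTaylorRemainder_le_of_abs_le_one {q : ℝ} (hq : 2 < q) :
    ∃ K, 0 < K ∧ ∀ δ, 0 < δ → δ ≤ 1 → ∀ t, |t| ≤ 1 →
      |rpowTaylorRemainder q t| ≤ K * (δ * t ^ 2 + δ ^ (2 - q) * |t| ^ q) := by
  rcases le_total q 3 with hq3 | hq3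
  · have hK : 0 < q * (q - 1) := mul_pos (by linarith) (by linarith)
    exact ⟨_, hK, fun δ hδ0 hδ1 t ht => (abs_rpowTaylorRemainder_le_of_le_three hq.le hq3 ht).trans
      (mul_le_mul_of_nonneg_left (abs_rpow_le_mul_sq_add_rpow_mul t hδ0 hδ1 hq.le) hK.le)⟩
  · have hK : 0 < q * (q - 1) * ((q - 2) * 2 ^ (q - 3)) :=
      mul_pos (mul_pos (by linarith) (by linarith)) (mul_pos (by linarith) (by positivity))
    exact ⟨_, hK, fun δ hδ0 hδ1 t ht => (abs_rpowTaylorRemainder_le_of_three_le hq3 ht).trans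
      (mul_le_mul_of_nonneg_left (abs_pow_three_le_mul_sq_add_rpow_mul t hδ0 hδ1 hq3) hK.le)⟩

theorem pointwise_truncated_taylor (q : ℝ) (hq : 2 < q) :
    ∃ C : ℝ, 0 < C ∧ ∀ δ : ℝ, 0 < δ → δ ≤ 1 → ∀ t : ℝ,
      |(|1 + t| ^ q) - 1 - q * t - q * (q - 1) / 2 * t ^ 2| ≤
        C * (δ * t ^ 2 + δ ^ (2 - q) * |t| ^ q) := by
  obtain ⟨K, hK, hsmall⟩ := exists_abs_rpowTaylorRemainder_le_of_abs_le_one hq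
  set L := 2 ^ q + 1 + q + q ^ 2
  have hL : 0 < L := by nlinarith [rpow_pos_of_pos two_pos q]
  refine ⟨K + L, by positivity, fun δ hδ0 hδ1 t => ?_⟩
  have hB : 0 ≤ δ * t ^ 2 + δ ^ (2 - q) * |t| ^ q := by positivity
  rcases le_or_gt |t| 1 with ht | ht
  · calc _ ≤ K * _ := hsmall δ hδ0 hδ1 t ht
      _ ≤ _ := mul_le_mul_of_nonneg_right (by linarith) hB
  · calc _ ≤ L * |t| ^ q := abs_rpowTaylorRemainder_le_of_one_le_abs hq.le ht.le
      _ ≤ L * _ := mul_le_mul_of_nonneg_left (abs_rpow_le_mul_sq_add_rpow_mul t hδ0 hδ1 hq.le) hL.le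
      _ ≤ _ := mul_le_mul_of_nonneg_right (by linarith) hB
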